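/- arXiv:1503.06484 — 3 statements merged into one kernel-verified Lean document; each statement's English description precedes it below -/
import Mathlib

section
/- Let t ∈ 𝒟 and suppose every entry of z = Ψ(t) is nonzero. Then, as ε → 0⁺, the quantity sup{ d(Ψ(x), Ψ(t))/d(x,t) : x ∈ B⁰(t,ε) ∩ 𝒟, x ≠ t } converges to max_i ( |W(t)⁻¹ H₂(t)| |t| )_i / |z_i|. -/
open Matrix
open scoped Kronecker

noncomputable section

/-- column-stacking `vec` of a matrix, indexed by (column, row). -/
def vecM {a b : ℕ} (M : Matrix (Fin a) (Fin b) ℝ) : Fin b × Fin a → ℝ :=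
  fun ji => M ji.2 ji.1

/-- Euclidean norm of a finitely-indexed real vector. -/
def l2norm {ι : Type*} [Fintype ι] (v : ι → ℝ) : ℝ :=
  Real.sqrt (∑ i, v i ^ 2)

/-- Frobenius norm of a real matrix. -/
def frob {ι κ : Type*} [Fintype ι] [Fintype κ] (M : Matrix ι κ ℝ) : ℝ :=
  Real.sqrt (∑ i, ∑ j, M i j ^ 2)

/-- Spectral norm of a real matrix: supremum of `‖M v‖₂` over the closed unit ball. -/
def specNorm {ι κ : Type*} [Fintype ι] [Fintype κ] (M : Matrix ι κ ℝ) : ℝ :=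
  sSup ((fun v => l2norm (M.mulVec v)) '' {v | l2norm v ≤ 1})

/-- sup-norm (`‖·‖∞`) of a finitely-indexed real vector. -/
def linf {ι : Type*} [Fintype ι] (v : ι → ℝ) : ℝ := ⨆ i, |v i|

/-- max-row-sum (∞-operator) norm of a real matrix. -/
def rowSumNorm {ι κ : Type*} [Fintype ι] [Fintype κ] (M : Matrix ι κ ℝ) : ℝ :=
  ⨆ i, ∑ j, |M i j|

/-- max-norm (`‖·‖_max`) of a real matrix. -/
def maxNorm {ι κ : Type*} [Fintype ι] [Fintype κ] (M : Matrix ι κ ℝ) : ℝ :=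
  ⨆ i, ⨆ j, |M i j|

/-- entrywise absolute value of a matrix. -/
def matAbs {ι κ : Type*} (M : Matrix ι κ ℝ) : Matrix ι κ ℝ := M.map (fun x => |x|)

/-- spectral radius (maximum modulus of the complex eigenvalues) of a real square matrix. -/
def specRad {ι : Type*} [Fintype ι] [DecidableEq ι] (M : Matrix ι ι ℝ) : ENNReal :=
  spectralRadius ℂ (M.map (fun x => (x : ℂ)))

/-- index type for the stacked vector `z = (vec X₁; vec Y₁; …; vec X_p; vec Y_p)`:
component `(k, 0, ·)` holds `vec X_k` and `(k, 1, ·)` holds `vec Y_k`. -/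
abbrev BIdx (m n p : ℕ) := Fin p × Fin 2 × Fin n × Fin m

/-- index type for the vec'd data `(vec A_k; vec B_k; vec E_k; vec C_k; vec D_k; vec F_k)`
of one period. -/
abbrev CIdx (m n : ℕ) :=
  (Fin m × Fin m) ⊕ (Fin n × Fin n) ⊕ (Fin n × Fin m) ⊕
  (Fin m × Fin m) ⊕ (Fin n × Fin n) ⊕ (Fin n × Fin m)

variable {m n p : ℕ}

/-- the stacked vector `(vec X₁; vec Y₁; …; vec X_p; vec Y_p)`. -/
def bigVec (X Y : Fin p → Matrix (Fin m) (Fin n) ℝ) : BIdx m n p → ℝ :=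
  fun x => if x.2.1 = 0 then vecM (X x.1) x.2.2 else vecM (Y x.1) x.2.2

/-- the coefficient matrix `W` of the PGCS equation: block row `(k,0)` has `Iₙ ⊗ A_k` in
block column `(k,0)` and `−(B_kᵀ ⊗ Iₘ)` in block column `(k,1)`; block row `(k,1)` has
`Iₙ ⊗ C_k` in block column `(k+1 mod p, 0)` and `−(D_kᵀ ⊗ Iₘ)` in block column `(k,1)`. -/
def Wmat [NeZero p] (A C : Fin p → Matrix (Fin m) (Fin m) ℝ)
    (B D : Fin p → Matrix (Fin n) (Fin n) ℝ) :
    Matrix (BIdx m n p) (BIdx m n p) ℝ :=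
  Matrix.of fun x y =>
    if x.2.1 = 0 then
      (if y.1 = x.1 ∧ y.2.1 = 0 then
        ((1 : Matrix (Fin n) (Fin n) ℝ) ⊗ₖ A x.1) x.2.2 y.2.2 else 0) +
      (if y.1 = x.1 ∧ y.2.1 = 1 then
        (-((B x.1)ᵀ ⊗ₖ (1 : Matrix (Fin m) (Fin m) ℝ))) x.2.2 y.2.2 else 0)
    else
      (if y.1 = x.1 + 1 ∧ y.2.1 = 0 then
        ((1 : Matrix (Fin n) (Fin n) ℝ) ⊗ₖ C x.1) x.2.2 y.2.2 else 0) +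
      (if y.1 = x.1 ∧ y.2.1 = 1 then
        (-((D x.1)ᵀ ⊗ₖ (1 : Matrix (Fin m) (Fin m) ℝ))) x.2.2 y.2.2 else 0)

/-- the block-diagonal matrix `Ĥ = diag(Ĥ⁽¹⁾,…,Ĥ⁽ᵖ⁾)` (also `H₁`, `H₂`) with block
`Ĥ⁽ᵏ⁾ = [α_k (X_kᵀ ⊗ Iₘ), −β_k (Iₙ ⊗ Y_k), −γ_k I, 0, 0, 0;
        0, 0, 0, ζ_k (X_{k+1}ᵀ ⊗ Iₘ), −τ_k (Iₙ ⊗ Y_k), −δ_k I]`. -/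
def Hmat [NeZero p] (Xh Yh : Fin p → Matrix (Fin m) (Fin n) ℝ)
    (al be ga ze ta de : Fin p → ℝ) :
    Matrix (BIdx m n p) (Fin p × CIdx m n) ℝ :=
  Matrix.of fun x y =>
    if y.1 = x.1 then
      if x.2.1 = 0 then
        (match y.2 with
        | Sum.inl a => al x.1 * (((Xh x.1)ᵀ ⊗ₖ (1 : Matrix (Fin m) (Fin m) ℝ)) x.2.2 a)
        | Sum.inr (Sum.inl b) =>
            -(be x.1 * (((1 : Matrix (Fin n) (Fin n) ℝ) ⊗ₖ Yh x.1) x.2.2 b))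
        | Sum.inr (Sum.inr (Sum.inl e)) =>
            -(ga x.1 * ((1 : Matrix (Fin n × Fin m) (Fin n × Fin m) ℝ) x.2.2 e))
        | _ => 0)
      else
        (match y.2 with
        | Sum.inr (Sum.inr (Sum.inr (Sum.inl c))) =>
            ze x.1 * (((Xh (x.1 + 1))ᵀ ⊗ₖ (1 : Matrix (Fin m) (Fin m) ℝ)) x.2.2 c)
        | Sum.inr (Sum.inr (Sum.inr (Sum.inr (Sum.inl d)))) =>
            -(ta x.1 * (((1 : Matrix (Fin n) (Fin n) ℝ) ⊗ₖ Yh x.1) x.2.2 d))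
        | Sum.inr (Sum.inr (Sum.inr (Sum.inr (Sum.inr f)))) =>
            -(de x.1 * ((1 : Matrix (Fin n × Fin m) (Fin n × Fin m) ℝ) x.2.2 f))
        | _ => 0)
    else 0

/-- the parameter vector `t = (vec A₁; vec B₁; vec E₁; vec C₁; vec D₁; vec F₁; …)`. -/
def tvec (A C : Fin p → Matrix (Fin m) (Fin m) ℝ)
    (B D : Fin p → Matrix (Fin n) (Fin n) ℝ)
    (E F : Fin p → Matrix (Fin m) (Fin n) ℝ) : Fin p × CIdx m n → ℝ :=
  fun y =>
    match y.2 with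
    | Sum.inl a => vecM (A y.1) a
    | Sum.inr (Sum.inl b) => vecM (B y.1) b
    | Sum.inr (Sum.inr (Sum.inl e)) => vecM (E y.1) e
    | Sum.inr (Sum.inr (Sum.inr (Sum.inl c))) => vecM (C y.1) c
    | Sum.inr (Sum.inr (Sum.inr (Sum.inr (Sum.inl d)))) => vecM (D y.1) d
    | Sum.inr (Sum.inr (Sum.inr (Sum.inr (Sum.inr f)))) => vecM (F y.1) f

/-- the matrix `A_k` encoded in a parameter vector `t`. -/
def pA (t : Fin p × CIdx m n → ℝ) (k : Fin p) : Matrix (Fin m) (Fin m) ℝ :=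
  Matrix.of fun i j => t (k, Sum.inl (j, i))

/-- the matrix `B_k` encoded in a parameter vector `t`. -/
def pB (t : Fin p × CIdx m n → ℝ) (k : Fin p) : Matrix (Fin n) (Fin n) ℝ :=
  Matrix.of fun i j => t (k, Sum.inr (Sum.inl (j, i)))

/-- the matrix `E_k` encoded in a parameter vector `t`. -/
def pE (t : Fin p × CIdx m n → ℝ) (k : Fin p) : Matrix (Fin m) (Fin n) ℝ :=
  Matrix.of fun i j => t (k, Sum.inr (Sum.inr (Sum.inl (j, i))))

/-- the matrix `C_k` encoded in a parameter vector `t`. -/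
def pC (t : Fin p × CIdx m n → ℝ) (k : Fin p) : Matrix (Fin m) (Fin m) ℝ :=
  Matrix.of fun i j => t (k, Sum.inr (Sum.inr (Sum.inr (Sum.inl (j, i)))))

/-- the matrix `D_k` encoded in a parameter vector `t`. -/
def pD (t : Fin p × CIdx m n → ℝ) (k : Fin p) : Matrix (Fin n) (Fin n) ℝ :=
  Matrix.of fun i j => t (k, Sum.inr (Sum.inr (Sum.inr (Sum.inr (Sum.inl (j, i))))))

/-- the matrix `F_k` encoded in a parameter vector `t`. -/
def pF (t : Fin p × CIdx m n → ℝ) (k : Fin p) : Matrix (Fin m) (Fin n) ℝ :=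
  Matrix.of fun i j => t (k, Sum.inr (Sum.inr (Sum.inr (Sum.inr (Sum.inr (j, i))))))

/-- the matrix `W(t)` built from the parameter vector `t`. -/
def Wt [NeZero p] (t : Fin p × CIdx m n → ℝ) : Matrix (BIdx m n p) (BIdx m n p) ℝ :=
  Wmat (pA t) (pC t) (pB t) (pD t)

/-- the right-hand side `g(t) = (vec E₁; vec F₁; …; vec E_p; vec F_p)`. -/
def gt (t : Fin p × CIdx m n → ℝ) : BIdx m n p → ℝ := bigVec (pE t) (pF t)

/-- the set of parameters for which `W(t)` is invertible. -/
def Dset (m n p : ℕ) [NeZero p] : Set (Fin p × CIdx m n → ℝ) := {t | IsUnit (Wt t)}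

/-- the solution map `Ψ(t) = W(t)⁻¹ g(t)`. -/
def Psi [NeZero p] (t : Fin p × CIdx m n → ℝ) : BIdx m n p → ℝ := (Wt t)⁻¹.mulVec (gt t)

/-- the solution matrix `X_k` read off from `Ψ(t)`. -/
def Xsol [NeZero p] (t : Fin p × CIdx m n → ℝ) (k : Fin p) : Matrix (Fin m) (Fin n) ℝ :=
  Matrix.of fun i j => Psi t (k, (0 : Fin 2), (j, i))

/-- the solution matrix `Y_k` read off from `Ψ(t)`. -/
def Ysol [NeZero p] (t : Fin p × CIdx m n → ℝ) (k : Fin p) : Matrix (Fin m) (Fin n) ℝ :=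
  Matrix.of fun i j => Psi t (k, (1 : Fin 2), (j, i))

/-- the matrix `H₂(t)` (all tolerances equal to one), built from the solution `Ψ(t)`. -/
def H2t [NeZero p] (t : Fin p × CIdx m n → ℝ) : Matrix (BIdx m n p) (Fin p × CIdx m n) ℝ :=
  Hmat (Xsol t) (Ysol t) 1 1 1 1 1 1

/-- the componentwise relative ball `B⁰(a, ε)`. -/
def B0 {ι : Type*} (a : ι → ℝ) (ε : ℝ) : Set (ι → ℝ) := {x | ∀ i, |x i - a i| ≤ ε * |a i|}

/-- the componentwise distance `d(x, a)`. -/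
def cdist {ι : Type*} [Fintype ι] (x a : ι → ℝ) : ℝ :=
  ⨆ i, if a i = 0 then |x i - a i| else |x i - a i| / |a i|

/-!
Since `W(x) Ψ(t) - g(x) = H₂(t) x` is linear in `x` and vanishes at `x = t`, the perturbation
identity `Ψ(x) - Ψ(t) = -W(x)⁻¹ H₂(t) (x - t)` holds exactly, so `Ψ` is differentiable at `t`
with Jacobian `G = -W(t)⁻¹ H₂(t)`. For any map `f` differentiable at `t` with `f(t)` free of
zeros, a perturbation `x ∈ B⁰(t, ε)` moves `f(x)_i` by at most `d(x, t) (|G| |t|)_i` plus a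
remainder that is small relative to `d(x, t)`; hence the ratio is at most
`max_i (|G| |t|)_i / |f(t)_i| + o(1)`. Conversely, for the maximizing row `i₀`, the perturbation
`x_j = t_j ± ε t_j`, with signs aligned to those of `G_{i₀ j} t_j`, attains this to first order.
-/

open Filter Topology

lemma abs_sSup_sub_le {S : Set ℝ} {a c q₀ : ℝ} (hub : ∀ q ∈ S, q ≤ a + c) (hq₀ : q₀ ∈ S)
    (hlow : a - c ≤ q₀) : |sSup S - a| ≤ c :=
  abs_sub_le_iff.2 ⟨by linarith [csSup_le ⟨q₀, hq₀⟩ hub], by linarith [le_csSup ⟨a + c, hub⟩ hq₀]⟩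

section Componentwise

variable {ι κ : Type*}

lemma eq_of_mem_B0_of_eq_zero {x a : ι → ℝ} {ε : ℝ} (hx : x ∈ B0 a ε) {i : ι} (hi : a i = 0) :
    x i = a i := by
  simpa [hi, sub_eq_zero] using hx i

variable [Fintype ι]

lemma cdist_nonneg (x a : ι → ℝ) : 0 ≤ cdist x a :=
  Real.iSup_nonneg fun i => by split_ifs <;> positivity

lemma div_le_cdist (x : ι → ℝ) {a : ι → ℝ} {i : ι} (hi : a i ≠ 0) :
    |x i - a i| / |a i| ≤ cdist x a := by
  refine le_ciSup_of_le (Set.finite_range _).bddAbove i ?_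
  rw [if_neg hi]

lemma cdist_le {x a : ι → ℝ} {c : ℝ} (hc : 0 ≤ c) (ha : ∀ i, a i ≠ 0)
    (h : ∀ i, |x i - a i| ≤ c * |a i|) : cdist x a ≤ c :=
  Real.iSup_le (fun i => by rw [if_neg (ha i), div_le_iff₀ (abs_pos.2 (ha i))]; exact h i) hc

lemma cdist_le_of_mem_B0 {x a : ι → ℝ} {ε : ℝ} (hε : 0 ≤ ε) (hx : x ∈ B0 a ε) :
    cdist x a ≤ ε := by
  refine Real.iSup_le (fun i => ?_) hε
  split_ifs with hi
  · rwa [eq_of_mem_B0_of_eq_zero hx hi, sub_self, abs_zero]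
  · rw [div_le_iff₀ (abs_pos.2 hi)]
    exact hx i

lemma abs_sub_le_cdist_mul {x a : ι → ℝ} {ε : ℝ} (hx : x ∈ B0 a ε) (i : ι) :
    |x i - a i| ≤ cdist x a * |a i| := by
  by_cases hi : a i = 0
  · simp [eq_of_mem_B0_of_eq_zero hx hi, hi]
  · exact (div_le_iff₀ (abs_pos.2 hi)).1 (div_le_cdist x hi)

lemma cdist_pos {x a : ι → ℝ} {ε : ℝ} (hx : x ∈ B0 a ε) (hne : x ≠ a) : 0 < cdist x a := by
  obtain ⟨i, hi⟩ := Function.ne_iff.1 hne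
  have hai : a i ≠ 0 := fun h => hi (eq_of_mem_B0_of_eq_zero hx h)
  exact (div_pos (abs_pos.2 (sub_ne_zero.2 hi)) (abs_pos.2 hai)).trans_le (div_le_cdist x hai)

lemma norm_le_mul_norm_of_abs_le {v a : ι → ℝ} {c : ℝ} (hc : 0 ≤ c)
    (h : ∀ i, |v i| ≤ c * |a i|) : ‖v‖ ≤ c * ‖a‖ :=
  (pi_norm_le_iff_of_nonneg (by positivity)).2 fun i =>
    (h i).trans (mul_le_mul_of_nonneg_left (norm_le_pi_norm a i) hc)

lemma eventually_forall_mem_B0 {t : ι → ℝ} {P : (ι → ℝ) → Prop} (hP : ∀ᶠ x in 𝓝 t, P x) :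
    ∀ᶠ ε in 𝓝[>] (0 : ℝ), ∀ x ∈ B0 t ε, P x := by
  obtain ⟨r, hr, hball⟩ := Metric.eventually_nhds_iff.1 hP
  have hsmall : ∀ᶠ ε in 𝓝[>] (0 : ℝ), ε < r / (‖t‖ + 1) :=
    nhdsWithin_le_nhds (eventually_lt_nhds (by positivity))
  filter_upwards [hsmall, self_mem_nhdsWithin] with ε hεr (hε : 0 < ε) x hx
  refine hball ?_
  calc dist x t = ‖x - t‖ := dist_eq_norm x t
    _ ≤ ε * ‖t‖ := norm_le_mul_norm_of_abs_le hε.le hx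
    _ ≤ ε * (‖t‖ + 1) := by gcongr; linarith
    _ < r := (lt_div_iff₀ (by positivity)).1 hεr

lemma matAbs_mulVec_abs_nonneg (G : Matrix κ ι ℝ) (a : ι → ℝ) (i : κ) :
    0 ≤ (matAbs G *ᵥ fun j => |a j|) i :=
  Finset.sum_nonneg fun j _ => mul_nonneg (abs_nonneg (G i j)) (abs_nonneg (a j))

lemma abs_mulVec_apply_le {G : Matrix κ ι ℝ} {v a : ι → ℝ} {c : ℝ}
    (h : ∀ j, |v j| ≤ c * |a j|) (i : κ) :
    |(G *ᵥ v) i| ≤ c * (matAbs G *ᵥ fun j => |a j|) i :=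
  calc |(G *ᵥ v) i| ≤ ∑ j, |G i j| * |v j| := by
        simpa only [Matrix.mulVec, dotProduct, abs_mul] using
          Finset.abs_sum_le_sum_abs (fun j => G i j * v j) Finset.univ
    _ ≤ ∑ j, |G i j| * (c * |a j|) := by gcongr with j; exact h j
    _ = c * (matAbs G *ᵥ fun j => |a j|) i := by
        simp only [Matrix.mulVec, dotProduct, matAbs, Matrix.map_apply, Finset.mul_sum]
        exact Finset.sum_congr rfl fun j _ => by ring

lemma exists_abs_eq_and_mulVec_apply_eq (G : Matrix κ ι ℝ) (a : ι → ℝ) (i : κ) :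
    ∃ v : ι → ℝ, (∀ j, |v j| = |a j|) ∧ (G *ᵥ v) i = (matAbs G *ᵥ fun j => |a j|) i := by
  refine ⟨fun j => if 0 ≤ G i j * a j then a j else -a j,
    fun j => by dsimp only; split_ifs <;> simp, ?_⟩
  simp only [Matrix.mulVec, dotProduct, matAbs, Matrix.map_apply]
  refine Finset.sum_congr rfl fun j _ => ?_
  split_ifs with h
  · rw [← abs_mul, abs_of_nonneg h]
  · rw [← abs_mul, abs_of_neg (not_le.1 h)]
    ring

lemma exists_mem_B0_cdist_eq {t : ι → ℝ} (ht : t ≠ 0) {ε : ℝ} (hε : 0 < ε)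
    (G : Matrix κ ι ℝ) (i : κ) :
    ∃ x ∈ B0 t ε, x ≠ t ∧ cdist x t = ε ∧
      (G *ᵥ (x - t)) i = ε * (matAbs G *ᵥ fun j => |t j|) i := by
  obtain ⟨v, hv, hGv⟩ := exists_abs_eq_and_mulVec_apply_eq G t i
  obtain ⟨j, hj⟩ := Function.ne_iff.1 ht
  have hdiff : ∀ j, |(t + ε • v) j - t j| = ε * |t j| := fun j => by
    simp [abs_mul, hv, abs_of_pos hε]
  have hx : t + ε • v ∈ B0 t ε := fun j => (hdiff j).le
  refine ⟨t + ε • v, hx, fun h => ?_, ?_, by simp [Matrix.mulVec_smul, hGv]⟩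
  · have := hdiff j
    simp only [h, sub_self, abs_zero] at this
    exact hj (abs_eq_zero.1 ((mul_eq_zero.1 this.symm).resolve_left hε.ne'))
  · refine le_antisymm (cdist_le_of_mem_B0 hε.le hx) ?_
    calc ε = |(t + ε • v) j - t j| / |t j| := by
          rw [hdiff, mul_div_assoc, div_self (abs_ne_zero.2 hj), mul_one]
      _ ≤ cdist (t + ε • v) t := div_le_cdist _ hj

variable [Fintype κ] {G : Matrix κ ι ℝ} {x t : ι → ℝ} {y z : κ → ℝ} {ε η : ℝ}

lemma cdist_div_cdist_le (hη : 0 ≤ η) (hx : x ∈ B0 t ε) (hne : x ≠ t) (hz : ∀ i, z i ≠ 0)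
    (hr : ‖y - z - G *ᵥ (x - t)‖ ≤ η * ‖x - t‖) :
    cdist y z / cdist x t ≤
      (⨆ i, (matAbs G *ᵥ fun j => |t j|) i / |z i|) + η * ⨆ i, ‖t‖ / |z i| := by
  set M := matAbs G *ᵥ fun j => |t j|
  set K := ⨆ i, M i / |z i|
  set C := ⨆ i, ‖t‖ / |z i|
  set d := cdist x t
  have hxt : ∀ j, |(x - t) j| ≤ d * |t j| := abs_sub_le_cdist_mul hx
  have hd : 0 ≤ d := cdist_nonneg x t
  have hK : 0 ≤ K := Real.iSup_nonneg fun i =>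
    div_nonneg (matAbs_mulVec_abs_nonneg G t i) (abs_nonneg _)
  have hC : 0 ≤ C := Real.iSup_nonneg fun i => by positivity
  rw [div_le_iff₀ (cdist_pos hx hne)]
  refine cdist_le (by positivity) hz fun i => ?_
  have hzi := abs_pos.2 (hz i)
  have hMi : M i ≤ K * |z i| :=
    (div_le_iff₀ hzi).1 (le_ciSup (f := fun i => M i / |z i|) (Set.finite_range _).bddAbove i)
  have hti : ‖t‖ ≤ C * |z i| :=
    (div_le_iff₀ hzi).1 (le_ciSup (f := fun i => ‖t‖ / |z i|) (Set.finite_range _).bddAbove i)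
  have hrem : |y i - z i - (G *ᵥ (x - t)) i| ≤ η * (d * ‖t‖) :=
    (norm_le_pi_norm (y - z - G *ᵥ (x - t)) i).trans <| hr.trans <|
      mul_le_mul_of_nonneg_left (norm_le_mul_norm_of_abs_le hd hxt) hη
  calc |y i - z i| ≤ |(G *ᵥ (x - t)) i| + |y i - z i - (G *ᵥ (x - t)) i| := by
        simpa using abs_add_le ((G *ᵥ (x - t)) i) (y i - z i - (G *ᵥ (x - t)) i)
    _ ≤ d * M i + η * (d * ‖t‖) := add_le_add (abs_mulVec_apply_le hxt i) hrem
    _ ≤ d * (K * |z i|) + η * (d * (C * |z i|)) := by gcongr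
    _ = (K + η * C) * d * |z i| := by ring

lemma le_cdist_div_cdist (hε : 0 < ε) (hη : 0 ≤ η) (hx : x ∈ B0 t ε) (hxt : cdist x t = ε)
    {i : κ} (hzi : z i ≠ 0) (hGi : (G *ᵥ (x - t)) i = ε * (matAbs G *ᵥ fun j => |t j|) i)
    (hr : ‖y - z - G *ᵥ (x - t)‖ ≤ η * ‖x - t‖) :
    (matAbs G *ᵥ fun j => |t j|) i / |z i| - η * (‖t‖ / |z i|) ≤ cdist y z / cdist x t := by
  have hrem : |y i - z i - (G *ᵥ (x - t)) i| ≤ η * (ε * ‖t‖) :=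
    (norm_le_pi_norm (y - z - G *ᵥ (x - t)) i).trans <| hr.trans <|
      mul_le_mul_of_nonneg_left (norm_le_mul_norm_of_abs_le hε.le hx) hη
  have hlin : |(G *ᵥ (x - t)) i| = ε * (matAbs G *ᵥ fun j => |t j|) i := by
    rw [hGi, abs_of_nonneg (mul_nonneg hε.le (matAbs_mulVec_abs_nonneg G t i))]
  have hlow : ε * (matAbs G *ᵥ fun j => |t j|) i - η * (ε * ‖t‖) ≤ |y i - z i| := by
    linarith [abs_sub_abs_le_abs_sub ((G *ᵥ (x - t)) i) (y i - z i),
      abs_sub_comm ((G *ᵥ (x - t)) i) (y i - z i)]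
  rw [hxt, le_div_iff₀ hε]
  calc _ = (ε * (matAbs G *ᵥ fun j => |t j|) i - η * (ε * ‖t‖)) / |z i| := by ring
    _ ≤ |y i - z i| / |z i| := by gcongr
    _ ≤ cdist y z := div_le_cdist y hzi

def componentwiseCond (f : (ι → ℝ) → κ → ℝ) (U : Set (ι → ℝ)) (t : ι → ℝ) (ε : ℝ) : ℝ :=
  sSup {q : ℝ | ∃ x, x ∈ B0 t ε ∩ U ∧ x ≠ t ∧ q = cdist (f x) (f t) / cdist x t}

theorem tendsto_componentwiseCond [Nonempty κ] {f : (ι → ℝ) → κ → ℝ} {U : Set (ι → ℝ)}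
    (hU : U ∈ 𝓝 t) (ht : t ≠ 0) (hf : HasFDerivAt f (LinearMap.toContinuousLinearMap G.mulVecLin) t)
    (hz : ∀ i, f t i ≠ 0) :
    Tendsto (componentwiseCond f U t) (𝓝[>] 0)
      (𝓝 (⨆ i, (matAbs G *ᵥ fun j => |t j|) i / |f t i|)) := by
  set M := matAbs G *ᵥ fun j => |t j|
  set C := ⨆ i, ‖t‖ / |f t i|
  obtain ⟨i₀, hi₀⟩ := Finite.exists_max fun i => M i / |f t i|
  have hC : ‖t‖ / |f t i₀| ≤ C :=
    le_ciSup (f := fun i => ‖t‖ / |f t i|) (Set.finite_range _).bddAbove i₀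
  rw [Metric.tendsto_nhds]
  intro δ hδ
  obtain ⟨η, hη, hηC⟩ := exists_pos_mul_lt hδ C
  have hrem : ∀ᶠ x in 𝓝 t, ‖f x - f t - G *ᵥ (x - t)‖ ≤ η * ‖x - t‖ :=
    hf.isLittleO.def hη
  filter_upwards [eventually_forall_mem_B0 ((show ∀ᶠ x in 𝓝 t, x ∈ U from hU).and hrem),
    self_mem_nhdsWithin] with ε hball (hε : 0 < ε)
  obtain ⟨x₀, hx₀, hne₀, hd₀, hG₀⟩ := exists_mem_B0_cdist_eq ht hε G i₀
  rw [Real.dist_eq, componentwiseCond]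
  refine (abs_sSup_sub_le (q₀ := cdist (f x₀) (f t) / cdist x₀ t) ?_ ?_ ?_).trans_lt
    (by linarith : η * C < δ)
  · rintro _ ⟨x, ⟨hx, -⟩, hne, rfl⟩
    exact cdist_div_cdist_le hη.le hx hne hz (hball x hx).2
  · exact ⟨x₀, ⟨hx₀, (hball x₀ hx₀).1⟩, hne₀, rfl⟩
  · calc (⨆ i, M i / |f t i|) - η * C ≤ M i₀ / |f t i₀| - η * (‖t‖ / |f t i₀|) := by
          gcongr
          exact ciSup_le hi₀
      _ ≤ _ := le_cdist_div_cdist hε hη.le hx₀ hd₀ (hz i₀) hG₀ (hball x₀ hx₀).2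

end Componentwise

section Caratheodory

attribute [local instance] Matrix.linftyOpNormedAddCommGroup

variable {ι κ : Type*} [Fintype ι] [Fintype κ]

theorem hasFDerivAt_of_sub_eq_mulVec {f : (ι → ℝ) → κ → ℝ} {A : (ι → ℝ) → Matrix κ ι ℝ}
    {t : ι → ℝ} (hA : ContinuousAt A t) (hf : ∀ᶠ x in 𝓝 t, f x - f t = A x *ᵥ (x - t)) :
    HasFDerivAt f (LinearMap.toContinuousLinearMap (A t).mulVecLin) t := by
  refine HasFDerivAt.of_isLittleO (Asymptotics.isLittleO_iff.2 fun c hc => ?_)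
  filter_upwards [hf, Metric.tendsto_nhds.1 hA c hc] with x hfx hAx
  rw [dist_eq_norm] at hAx
  calc ‖f x - f t - LinearMap.toContinuousLinearMap (A t).mulVecLin (x - t)‖
      = ‖(A x - A t) *ᵥ (x - t)‖ := by
        rw [hfx, Matrix.sub_mulVec]
        rfl
    _ ≤ ‖A x - A t‖ * ‖x - t‖ := Matrix.linfty_opNorm_mulVec _ _
    _ ≤ c * ‖x - t‖ := by gcongr

end Caratheodory

lemma matAbs_neg {ι κ : Type*} (M : Matrix ι κ ℝ) : matAbs (-M) = matAbs M := by
  ext i j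
  simp [matAbs]

section Periodic

variable {m n p : ℕ} [NeZero p]

theorem continuous_Wt : Continuous (Wt : (Fin p × CIdx m n → ℝ) → _) := by
  refine continuous_pi fun x => continuous_pi fun y => ?_
  simp only [Wt, Wmat, pA, pB, pC, pD, Matrix.of_apply, Matrix.kroneckerMap_apply,
    Matrix.transpose_apply, Matrix.neg_apply]
  split_ifs <;> fun_prop

theorem isOpen_Dset : IsOpen (Dset m n p) := by
  simp only [Dset, Matrix.isUnit_iff_isUnit_det, isUnit_iff_ne_zero]
  exact isOpen_ne_fun continuous_Wt.matrix_det continuous_const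

-- For `m = 0` or `n = 0` the matrix ring is trivial and `Dset` is everything.
theorem ne_zero_of_mem_Dset [NeZero m] [NeZero n] {t : Fin p × CIdx m n → ℝ}
    (ht : t ∈ Dset m n p) : t ≠ 0 := by
  rintro rfl
  have hW : Wt (0 : Fin p × CIdx m n → ℝ) = 0 := by
    ext x y
    simp [Wt, Wmat, pA, pB, pC, pD]
  simp only [Dset, Set.mem_ofPred_eq, hW, isUnit_zero_iff] at ht
  exact zero_ne_one ht

theorem Wt_mulVec_Psi_sub_gt (t x : Fin p × CIdx m n → ℝ) :
    Wt x *ᵥ Psi t - gt x = H2t t *ᵥ x := by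
  ext ⟨k, s, j, i⟩
  fin_cases s <;>
  · simp only [Wt, Wmat, pA, pB, pC, pD, gt, bigVec, vecM, pE, pF, H2t, Hmat, Xsol, Ysol,
      Fin.isValue, Fin.zero_eta, Fin.mk_one, kroneckerMap_apply, Matrix.one_apply, of_apply,
      Matrix.neg_apply, transpose_apply, Pi.sub_apply, Pi.one_apply, mulVec, dotProduct,
      ite_mul, mul_ite, one_mul, mul_one, zero_mul, mul_zero, neg_mul, ite_and, ite_self,
      ↓reduceIte, zero_ne_one, one_ne_zero, add_zero, zero_add, Fintype.sum_prod_type,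
      Fintype.sum_sum_type, Fin.sum_univ_two, Finset.sum_ite_irrel, Finset.sum_const_zero,
      Finset.sum_ite_eq, Finset.sum_ite_eq', Finset.mem_univ, Finset.sum_neg_distrib,
      Finset.sum_add_distrib, mul_comm (Psi t _)]
    ring

theorem Wt_mulVec_Psi {t : Fin p × CIdx m n → ℝ} (ht : t ∈ Dset m n p) :
    Wt t *ᵥ Psi t = gt t := by
  rw [Psi, Matrix.mulVec_mulVec, Matrix.mul_nonsing_inv _ ((Matrix.isUnit_iff_isUnit_det _).1 ht),
    Matrix.one_mulVec]

theorem Psi_sub_Psi {t x : Fin p × CIdx m n → ℝ} (ht : t ∈ Dset m n p) (hx : x ∈ Dset m n p) :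
    Psi x - Psi t = -((Wt x)⁻¹ * H2t t) *ᵥ (x - t) := by
  have hHt : H2t t *ᵥ t = 0 := by rw [← Wt_mulVec_Psi_sub_gt, Wt_mulVec_Psi ht, sub_self]
  have hWx := (Matrix.isUnit_iff_isUnit_det _).1 hx
  calc Psi x - Psi t = (Wt x)⁻¹ *ᵥ (Wt x *ᵥ (Psi x - Psi t)) := by
        rw [Matrix.mulVec_mulVec, Matrix.nonsing_inv_mul _ hWx, Matrix.one_mulVec]
    _ = -((Wt x)⁻¹ * H2t t) *ᵥ (x - t) := by
        rw [Matrix.mulVec_sub, Wt_mulVec_Psi hx, ← neg_sub, Wt_mulVec_Psi_sub_gt,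
          Matrix.neg_mulVec, ← Matrix.mulVec_mulVec, Matrix.mulVec_sub, hHt, sub_zero,
          Matrix.mulVec_neg]

theorem hasFDerivAt_Psi {t : Fin p × CIdx m n → ℝ} (ht : t ∈ Dset m n p) :
    HasFDerivAt Psi (LinearMap.toContinuousLinearMap (-((Wt t)⁻¹ * H2t t)).mulVecLin) t := by
  have hdet : (Wt t).det ≠ 0 := ((Matrix.isUnit_iff_isUnit_det _).1 ht).ne_zero
  have hinv : ContinuousAt (fun x => (Wt x)⁻¹) t :=
    (continuousAt_matrix_inv _ (by simpa [Ring.inverse_eq_inv'] using continuousAt_inv₀ hdet)).comp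
      continuous_Wt.continuousAt
  have hA : ContinuousAt (fun x => -((Wt x)⁻¹ * H2t t)) t := by fun_prop
  refine hasFDerivAt_of_sub_eq_mulVec hA ?_
  filter_upwards [isOpen_Dset.mem_nhds ht] with x hx using Psi_sub_Psi ht hx

end Periodic

/-- the componentwise condition number of `Ψ` at `t` equals
`max_i (|W(t)⁻¹H₂(t)| |t|)_i / |Ψ(t)_i|`. -/
theorem componentwise_condition_number (m n p : ℕ) [NeZero m] [NeZero n] [NeZero p]
    (t : Fin p × CIdx m n → ℝ) (ht : t ∈ Dset m n p) (hz : ∀ i, Psi t i ≠ 0) :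
    Filter.Tendsto
      (fun ε : ℝ => sSup {q : ℝ | ∃ x, x ∈ B0 t ε ∩ Dset m n p ∧ x ≠ t ∧
        q = cdist (Psi x) (Psi t) / cdist x t})
      (nhdsWithin 0 (Set.Ioi 0))
      (nhds (⨆ i, ((matAbs ((Wt t)⁻¹ * H2t t)).mulVec (fun j => |t j|)) i /
        |Psi t i|)) := by
  have h := tendsto_componentwiseCond (isOpen_Dset.mem_nhds ht) (ne_zero_of_mem_Dset ht)
    (hasFDerivAt_Psi ht) hz
  rwa [matAbs_neg] at h
end
end

section
/- Assume W is invertible and let (X_k, Y_k) be the unique solution of the PGCS equation. Then ‖ |W⁻¹H₂| |t| ‖∞ ≤ ‖W⁻¹‖∞ · max over k = 1,…,p of max( ‖ |A_k||X_k| + |Y_k||B_k| + |E_k| ‖_max, ‖ |C_k||X_{k+1}| + |Y_k||D_k| + |F_k| ‖_max ). -/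
open Matrix
open scoped Kronecker

noncomputable section

variable {m n p : ℕ}

section aux

variable {m n p : ℕ} [NeZero p]

lemma entry_le_maxNorm {ι κ : Type*} [Fintype ι] [Fintype κ] (M : Matrix ι κ ℝ)
    (i : ι) (j : κ) : |M i j| ≤ maxNorm M := by
  have h1 : |M i j| ≤ ⨆ j', |M i j'| :=
    le_ciSup (f := fun j' => |M i j'|) (Set.Finite.bddAbove (Set.finite_range _)) j
  exact h1.trans (le_ciSup (f := fun i' => ⨆ j', |M i' j'|)
    (Set.Finite.bddAbove (Set.finite_range _)) i)

lemma row0_sum (A C : Fin p → Matrix (Fin m) (Fin m) ℝ)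
    (B D : Fin p → Matrix (Fin n) (Fin n) ℝ)
    (E F X Y : Fin p → Matrix (Fin m) (Fin n) ℝ) (k : Fin p) (j : Fin n) (i : Fin m) :
    ∑ y : Fin p × CIdx m n,
      |Hmat X Y 1 1 1 1 1 1 (k, (0 : Fin 2), (j, i)) y| * |tvec A C B D E F y| =
    (matAbs (A k) * matAbs (X k) + matAbs (Y k) * matAbs (B k) + matAbs (E k)) i j := by
  rw [Fintype.sum_prod_type]
  rw [Finset.sum_eq_single k (fun k' _ hk => by simp [Hmat, hk]) (by simp)]
  simp only [Fintype.sum_sum_type]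
  have hA : ∀ a : Fin m × Fin m,
      |Hmat X Y 1 1 1 1 1 1 (k, (0 : Fin 2), (j, i)) (k, Sum.inl a)| *
        |tvec A C B D E F (k, Sum.inl a)| =
      |Hmat X Y 1 1 1 1 1 1 (k, (0 : Fin 2), (j, i)) (k, Sum.inl a)| * |A k a.2 a.1| := by
    intro a; simp [tvec, vecM]
  have hB : ∀ b : Fin n × Fin n,
      |Hmat X Y 1 1 1 1 1 1 (k, (0 : Fin 2), (j, i)) (k, Sum.inr (Sum.inl b))| *
        |tvec A C B D E F (k, Sum.inr (Sum.inl b))| =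
      |Hmat X Y 1 1 1 1 1 1 (k, (0 : Fin 2), (j, i)) (k, Sum.inr (Sum.inl b))| *
        |B k b.2 b.1| := by
    intro b; simp [tvec, vecM]
  have hE : ∀ e : Fin n × Fin m,
      |Hmat X Y 1 1 1 1 1 1 (k, (0 : Fin 2), (j, i)) (k, Sum.inr (Sum.inr (Sum.inl e)))| *
        |tvec A C B D E F (k, Sum.inr (Sum.inr (Sum.inl e)))| =
      |Hmat X Y 1 1 1 1 1 1 (k, (0 : Fin 2), (j, i)) (k, Sum.inr (Sum.inr (Sum.inl e)))| *
        |E k e.2 e.1| := by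
    intro e; simp [tvec, vecM]
  simp only [hA, hB, hE]
  have h1 : ∑ a : Fin m × Fin m,
      |Hmat X Y 1 1 1 1 1 1 (k, (0 : Fin 2), (j, i)) (k, Sum.inl a)| * |A k a.2 a.1| =
      (matAbs (A k) * matAbs (X k)) i j := by
    simp only [Hmat, Matrix.of_apply, if_pos rfl, Pi.one_apply, one_mul,
      Matrix.kroneckerMap_apply, Matrix.transpose_apply, Matrix.one_apply,
      mul_ite, mul_one, mul_zero, apply_ite (abs : ℝ → ℝ), abs_zero, ite_mul, zero_mul]
    rw [Fintype.sum_prod_type]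
    simp [Finset.sum_ite_eq, matAbs, Matrix.mul_apply, abs_mul, mul_comm]
  have h2 : ∑ b : Fin n × Fin n,
      |Hmat X Y 1 1 1 1 1 1 (k, (0 : Fin 2), (j, i)) (k, Sum.inr (Sum.inl b))| *
        |B k b.2 b.1| = (matAbs (Y k) * matAbs (B k)) i j := by
    simp only [Hmat, Matrix.of_apply, if_pos rfl, Pi.one_apply, one_mul, abs_neg,
      Matrix.kroneckerMap_apply, Matrix.one_apply,
      ite_mul, one_mul, zero_mul, apply_ite (abs : ℝ → ℝ), abs_zero]
    rw [Fintype.sum_prod_type]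
    simp [Finset.sum_ite_eq, matAbs, Matrix.mul_apply, abs_mul]
  have h3 : ∑ e : Fin n × Fin m,
      |Hmat X Y 1 1 1 1 1 1 (k, (0 : Fin 2), (j, i)) (k, Sum.inr (Sum.inr (Sum.inl e)))| *
        |E k e.2 e.1| = matAbs (E k) i j := by
    simp only [Hmat, Matrix.of_apply, if_pos rfl, Pi.one_apply, one_mul, abs_neg,
      Matrix.one_apply, apply_ite (abs : ℝ → ℝ), abs_zero, abs_one, ite_mul, one_mul,
      zero_mul]
    rw [Fintype.sum_prod_type]
    simp [Finset.sum_ite_eq, matAbs, Prod.ext_iff, ite_and]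
  have h4 : ∀ c : Fin m × Fin m,
      |Hmat X Y 1 1 1 1 1 1 (k, (0 : Fin 2), (j, i))
        (k, Sum.inr (Sum.inr (Sum.inr (Sum.inl c))))| *
        |tvec A C B D E F (k, Sum.inr (Sum.inr (Sum.inr (Sum.inl c))))| = 0 := by
    intro c; simp [Hmat]
  have h5 : ∀ d : Fin n × Fin n,
      |Hmat X Y 1 1 1 1 1 1 (k, (0 : Fin 2), (j, i))
        (k, Sum.inr (Sum.inr (Sum.inr (Sum.inr (Sum.inl d)))))| *
        |tvec A C B D E F (k, Sum.inr (Sum.inr (Sum.inr (Sum.inr (Sum.inl d)))))| = 0 := by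
    intro d; simp [Hmat]
  have h6 : ∀ f : Fin n × Fin m,
      |Hmat X Y 1 1 1 1 1 1 (k, (0 : Fin 2), (j, i))
        (k, Sum.inr (Sum.inr (Sum.inr (Sum.inr (Sum.inr f)))))| *
        |tvec A C B D E F (k, Sum.inr (Sum.inr (Sum.inr (Sum.inr (Sum.inr f)))))| = 0 := by
    intro f; simp [Hmat]
  simp only [h4, h5, h6, Finset.sum_const_zero, add_zero]
  rw [h1, h2, h3]
  simp only [Matrix.add_apply]
  ring

lemma row1_sum (A C : Fin p → Matrix (Fin m) (Fin m) ℝ)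
    (B D : Fin p → Matrix (Fin n) (Fin n) ℝ)
    (E F X Y : Fin p → Matrix (Fin m) (Fin n) ℝ) (k : Fin p) (j : Fin n) (i : Fin m) :
    ∑ y : Fin p × CIdx m n,
      |Hmat X Y 1 1 1 1 1 1 (k, (1 : Fin 2), (j, i)) y| * |tvec A C B D E F y| =
    (matAbs (C k) * matAbs (X (k + 1)) + matAbs (Y k) * matAbs (D k) + matAbs (F k)) i j := by
  have hne : ((1 : Fin 2) = 0) = False := by simp
  rw [Fintype.sum_prod_type]
  rw [Finset.sum_eq_single k (fun k' _ hk => by simp [Hmat, hk]) (by simp)]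
  simp only [Fintype.sum_sum_type]
  have h4 : ∑ c : Fin m × Fin m,
      |Hmat X Y 1 1 1 1 1 1 (k, (1 : Fin 2), (j, i))
        (k, Sum.inr (Sum.inr (Sum.inr (Sum.inl c))))| *
        |tvec A C B D E F (k, Sum.inr (Sum.inr (Sum.inr (Sum.inl c))))| =
      (matAbs (C k) * matAbs (X (k + 1))) i j := by
    simp only [Hmat, tvec, vecM, Matrix.of_apply, if_pos rfl, hne, if_false,
      Pi.one_apply, one_mul, Matrix.kroneckerMap_apply, Matrix.transpose_apply,
      Matrix.one_apply, mul_ite, mul_one, mul_zero, apply_ite (abs : ℝ → ℝ), abs_zero,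
      ite_mul, zero_mul]
    rw [Fintype.sum_prod_type]
    simp [Finset.sum_ite_eq, matAbs, Matrix.mul_apply, abs_mul, mul_comm]
  have h5 : ∑ d : Fin n × Fin n,
      |Hmat X Y 1 1 1 1 1 1 (k, (1 : Fin 2), (j, i))
        (k, Sum.inr (Sum.inr (Sum.inr (Sum.inr (Sum.inl d)))))| *
        |tvec A C B D E F (k, Sum.inr (Sum.inr (Sum.inr (Sum.inr (Sum.inl d)))))| =
      (matAbs (Y k) * matAbs (D k)) i j := by
    simp only [Hmat, tvec, vecM, Matrix.of_apply, if_pos rfl, hne, if_false,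
      Pi.one_apply, one_mul, abs_neg, Matrix.kroneckerMap_apply, Matrix.one_apply,
      ite_mul, one_mul, zero_mul, apply_ite (abs : ℝ → ℝ), abs_zero]
    rw [Fintype.sum_prod_type]
    simp [Finset.sum_ite_eq, matAbs, Matrix.mul_apply, abs_mul]
  have h6 : ∑ f : Fin n × Fin m,
      |Hmat X Y 1 1 1 1 1 1 (k, (1 : Fin 2), (j, i))
        (k, Sum.inr (Sum.inr (Sum.inr (Sum.inr (Sum.inr f)))))| *
        |tvec A C B D E F (k, Sum.inr (Sum.inr (Sum.inr (Sum.inr (Sum.inr f)))))| =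
      matAbs (F k) i j := by
    simp only [Hmat, tvec, vecM, Matrix.of_apply, if_pos rfl, hne, if_false,
      Pi.one_apply, one_mul, abs_neg, Matrix.one_apply, apply_ite (abs : ℝ → ℝ),
      abs_zero, abs_one, ite_mul, one_mul, zero_mul]
    rw [Fintype.sum_prod_type]
    simp [Finset.sum_ite_eq, matAbs, Prod.ext_iff, ite_and]
  have h1 : ∀ a : Fin m × Fin m,
      |Hmat X Y 1 1 1 1 1 1 (k, (1 : Fin 2), (j, i)) (k, Sum.inl a)| *
        |tvec A C B D E F (k, Sum.inl a)| = 0 := by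
    intro a; simp [Hmat]
  have h2 : ∀ b : Fin n × Fin n,
      |Hmat X Y 1 1 1 1 1 1 (k, (1 : Fin 2), (j, i)) (k, Sum.inr (Sum.inl b))| *
        |tvec A C B D E F (k, Sum.inr (Sum.inl b))| = 0 := by
    intro b; simp [Hmat]
  have h3 : ∀ e : Fin n × Fin m,
      |Hmat X Y 1 1 1 1 1 1 (k, (1 : Fin 2), (j, i)) (k, Sum.inr (Sum.inr (Sum.inl e)))| *
        |tvec A C B D E F (k, Sum.inr (Sum.inr (Sum.inl e)))| = 0 := by
    intro e; simp [Hmat]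
  simp only [h1, h2, h3, Finset.sum_const_zero, zero_add]
  rw [h4, h5, h6]
  simp only [Matrix.add_apply]
  ring

end aux

/-- upper bound for the mixed condition number numerator:
`‖ |W⁻¹H₂| |t| ‖∞ ≤ ‖W⁻¹‖∞ · max_k max(‖|A_k||X_k|+|Y_k||B_k|+|E_k|‖_max,
‖|C_k||X_{k+1}|+|Y_k||D_k|+|F_k|‖_max)`. -/
theorem mixed_condition_upper_bound (m n p : ℕ) [NeZero m] [NeZero n] [NeZero p]
    (A C : Fin p → Matrix (Fin m) (Fin m) ℝ) (B D : Fin p → Matrix (Fin n) (Fin n) ℝ)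
    (E F X Y : Fin p → Matrix (Fin m) (Fin n) ℝ)
    (hW : IsUnit (Wmat A C B D))
    (hsol : ∀ k : Fin p, A k * X k - Y k * B k = E k ∧ C k * X (k + 1) - Y k * D k = F k) :
    linf ((matAbs ((Wmat A C B D)⁻¹ * Hmat X Y 1 1 1 1 1 1)).mulVec
        (fun j => |tvec A C B D E F j|)) ≤
      rowSumNorm (Wmat A C B D)⁻¹ *
        ⨆ k : Fin p,
          max (maxNorm (matAbs (A k) * matAbs (X k) + matAbs (Y k) * matAbs (B k) +
                matAbs (E k)))
            (maxNorm (matAbs (C k) * matAbs (X (k + 1)) + matAbs (Y k) * matAbs (D k) +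
              matAbs (F k))) := by
    classical
  set W := (Wmat A C B D)⁻¹ with hWdef
  set H := Hmat X Y 1 1 1 1 1 1 with hHdef
  set t := tvec A C B D E F with htdef
  set S := ⨆ k : Fin p,
      max (maxNorm (matAbs (A k) * matAbs (X k) + matAbs (Y k) * matAbs (B k) +
            matAbs (E k)))
        (maxNorm (matAbs (C k) * matAbs (X (k + 1)) + matAbs (Y k) * matAbs (D k) +
          matAbs (F k))) with hSdef
  have hbddS : BddAbove (Set.range fun k : Fin p =>
      max (maxNorm (matAbs (A k) * matAbs (X k) + matAbs (Y k) * matAbs (B k) +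
            matAbs (E k)))
        (maxNorm (matAbs (C k) * matAbs (X (k + 1)) + matAbs (Y k) * matAbs (D k) +
          matAbs (F k)))) := Set.Finite.bddAbove (Set.finite_range _)
  obtain ⟨k0⟩ : Nonempty (Fin p) := inferInstance
  obtain ⟨i0⟩ : Nonempty (Fin m) := inferInstance
  obtain ⟨j0⟩ : Nonempty (Fin n) := inferInstance
  have hS0 : 0 ≤ S := by
    refine le_trans ?_ (le_ciSup hbddS k0)
    refine le_trans ?_ (le_max_left _ _)
    exact (abs_nonneg _).trans (entry_le_maxNorm _ i0 j0)
  have hrow : ∀ z : BIdx m n p, ∑ y, |H z y| * |t y| ≤ S := by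
    rintro ⟨k, u, j, i⟩
    fin_cases u
    · refine le_trans (le_of_eq (row0_sum A C B D E F X Y k j i)) ?_
      refine le_trans ?_ (le_ciSup hbddS k)
      refine le_trans ?_ (le_max_left _ _)
      exact le_trans (le_abs_self _) (entry_le_maxNorm _ i j)
    · refine le_trans (le_of_eq (row1_sum A C B D E F X Y k j i)) ?_
      refine le_trans ?_ (le_ciSup hbddS k)
      refine le_trans ?_ (le_max_right _ _)
      exact le_trans (le_abs_self _) (entry_le_maxNorm _ i j)
  rw [linf]
  refine ciSup_le fun x => ?_
  have hx : (matAbs (W * H)).mulVec (fun y => |t y|) x = ∑ y, |(W * H) x y| * |t y| := by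
    simp [Matrix.mulVec, matAbs, dotProduct]
  have hnn : 0 ≤ (matAbs (W * H)).mulVec (fun y => |t y|) x := by
    rw [hx]
    exact Finset.sum_nonneg fun y _ => mul_nonneg (abs_nonneg _) (abs_nonneg _)
  rw [abs_of_nonneg hnn, hx]
  calc ∑ y, |(W * H) x y| * |t y|
      ≤ ∑ y, (∑ z, |W x z| * |H z y|) * |t y| := by
        refine Finset.sum_le_sum fun y _ => ?_
        refine mul_le_mul_of_nonneg_right ?_ (abs_nonneg _)
        rw [Matrix.mul_apply]
        exact le_trans (Finset.abs_sum_le_sum_abs _ _)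
          (le_of_eq (Finset.sum_congr rfl fun z _ => abs_mul _ _))
    _ = ∑ z, |W x z| * ∑ y, |H z y| * |t y| := by
        simp_rw [Finset.sum_mul, mul_assoc]
        rw [Finset.sum_comm]
        simp_rw [← Finset.mul_sum]
    _ ≤ ∑ z, |W x z| * S := by
        exact Finset.sum_le_sum fun z _ =>
          mul_le_mul_of_nonneg_left (hrow z) (abs_nonneg _)
    _ = (∑ z, |W x z|) * S := (Finset.sum_mul _ _ _).symm
    _ ≤ rowSumNorm W * S := by
        refine mul_le_mul_of_nonneg_right ?_ hS0
        rw [rowSumNorm]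
        exact le_ciSup (f := fun x' => ∑ z, |W x' z|)
          (Set.Finite.bddAbove (Set.finite_range _)) x
end
end

section
/- Assume W is invertible, let (X_k, Y_k) be the unique solution of the PGCS equation with z = (vec(X_1); vec(Y_1); …; vec(X_p); vec(Y_p)), let w ∈ ℝ^{2pmn} have entries w_i = (|W⁻¹H₂||t|)_i / |z_i| if z_i ≠ 0 and w_i = (|W⁻¹H₂||t|)_i if z_i = 0, and let S‡ be the diagonal matrix whose i-th diagonal entry is 1/z_i if z_i ≠ 0 and 1 otherwise. Then ‖w‖∞ ≤ ‖S‡ W⁻¹‖∞ · max over k = 1,…,p of max( ‖ |A_k||X_k| + |Y_k||B_k| + |E_k| ‖_max, ‖ |C_k||X_{k+1}| + |Y_k||D_k| + |F_k| ‖_max ). -/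
open Matrix
open scoped Kronecker

noncomputable section

variable {m n p : ℕ}

/-! The bound holds with `W⁻¹` replaced by any matrix `K`. The scaling `S‡` is diagonal, so it
pulls out of the entrywise absolute value and `w = |S‡ K H₂| |t|`. Then
`|S‡ K H₂| |t| ≤ |S‡ K| (|H₂| |t|)` gives `‖w‖∞ ≤ ‖S‡ K‖∞ ‖|H₂| |t|‖∞`, and `H₂` is
block diagonal, so the rows of `|H₂| |t|` are the entries of
`|A_k||X_k| + |Y_k||B_k| + |E_k|` and `|C_k||X_{k+1}| + |Y_k||D_k| + |F_k|`. -/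

section Norms

variable {ι κ ν : Type*} [Fintype ι] [Fintype κ] [Fintype ν]

lemma abs_le_maxNorm (M : Matrix ι κ ℝ) (i : ι) (j : κ) : |M i j| ≤ maxNorm M :=
  (le_ciSup (Set.finite_range fun j' => |M i j'|).bddAbove j).trans
    (le_ciSup (Set.finite_range fun i' => ⨆ j', |M i' j'|).bddAbove i)

lemma maxNorm_nonneg (M : Matrix ι κ ℝ) : 0 ≤ maxNorm M :=
  Real.iSup_nonneg fun _ => Real.iSup_nonneg fun _ => abs_nonneg _

lemma abs_le_linf (v : ι → ℝ) (i : ι) : |v i| ≤ linf v :=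
  le_ciSup (Set.finite_range fun i' => |v i'|).bddAbove i

lemma linf_nonneg (v : ι → ℝ) : 0 ≤ linf v :=
  Real.iSup_nonneg fun _ => abs_nonneg _

lemma sum_abs_le_rowSumNorm (M : Matrix ι κ ℝ) (i : ι) : ∑ j, |M i j| ≤ rowSumNorm M :=
  le_ciSup (Set.finite_range fun i' => ∑ j, |M i' j|).bddAbove i

lemma rowSumNorm_nonneg (M : Matrix ι κ ℝ) : 0 ≤ rowSumNorm M :=
  Real.iSup_nonneg fun _ => Finset.sum_nonneg fun _ _ => abs_nonneg _

omit [Fintype ι] in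
lemma matAbs_mulVec_nonneg (M : Matrix ι κ ℝ) {u : κ → ℝ} (hu : 0 ≤ u) : 0 ≤ matAbs M *ᵥ u :=
  fun _ => Finset.sum_nonneg fun j _ => mul_nonneg (abs_nonneg _) (hu j)

lemma abs_matAbs_mulVec_le (P : Matrix ι κ ℝ) (y : κ → ℝ) (i : ι) :
    |(matAbs P *ᵥ y) i| ≤ rowSumNorm P * linf y :=
  calc |(matAbs P *ᵥ y) i| ≤ ∑ l, |P i l| * |y l| := by
        simpa only [mulVec, dotProduct, matAbs, map_apply, abs_mul, abs_abs]
          using Finset.abs_sum_le_sum_abs (fun l => |P i l| * y l) Finset.univ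
    _ ≤ ∑ l, |P i l| * linf y :=
        Finset.sum_le_sum fun l _ => mul_le_mul_of_nonneg_left (abs_le_linf y l) (abs_nonneg _)
    _ ≤ rowSumNorm P * linf y := by
        rw [← Finset.sum_mul]
        exact mul_le_mul_of_nonneg_right (sum_abs_le_rowSumNorm P i) (linf_nonneg y)

omit [Fintype ι] in
lemma matAbs_mul_mulVec_le (P : Matrix ι κ ℝ) (Q : Matrix κ ν ℝ) {u : ν → ℝ} (hu : 0 ≤ u)
    (i : ι) : (matAbs (P * Q) *ᵥ u) i ≤ (matAbs P *ᵥ (matAbs Q *ᵥ u)) i := by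
  rw [mulVec_mulVec]
  refine Finset.sum_le_sum fun j _ => mul_le_mul_of_nonneg_right ?_ (hu j)
  simpa only [matAbs, map_apply, mul_apply, abs_mul]
    using Finset.abs_sum_le_sum_abs (fun l => P i l * Q l j) Finset.univ

lemma linf_matAbs_mul_mulVec_le (P : Matrix ι κ ℝ) (Q : Matrix κ ν ℝ) {u : ν → ℝ}
    (hu : 0 ≤ u) : linf (matAbs (P * Q) *ᵥ u) ≤ rowSumNorm P * linf (matAbs Q *ᵥ u) := by
  refine Real.iSup_le (fun i => ?_) (mul_nonneg (rowSumNorm_nonneg P) (linf_nonneg _))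
  rw [abs_of_nonneg (matAbs_mulVec_nonneg _ hu i)]
  exact (matAbs_mul_mulVec_le P Q hu i).trans
    ((le_abs_self _).trans (abs_matAbs_mulVec_le _ _ i))

lemma matAbs_diagonal_mul_mulVec [DecidableEq ι] (s : ι → ℝ) (M : Matrix ι κ ℝ) (u : κ → ℝ)
    (i : ι) : (matAbs (diagonal s * M) *ᵥ u) i = |s i| * (matAbs M *ᵥ u) i := by
  simp only [mulVec, dotProduct, matAbs, map_apply, diagonal_mul, abs_mul, Finset.mul_sum,
    mul_assoc]

end Norms

section PGCS

variable [NeZero p] (A C : Fin p → Matrix (Fin m) (Fin m) ℝ)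
  (B D : Fin p → Matrix (Fin n) (Fin n) ℝ) (E F X Y : Fin p → Matrix (Fin m) (Fin n) ℝ) (al be ga ze ta de : Fin p → ℝ)

lemma matAbs_Hmat_mulVec_abs_tvec_fst (k : Fin p) (j : Fin n) (i : Fin m) :
    (matAbs (Hmat X Y al be ga ze ta de) *ᵥ fun y => |tvec A C B D E F y|) (k, 0, j, i) =
      |al k| * (matAbs (A k) * matAbs (X k)) i j + |be k| * (matAbs (Y k) * matAbs (B k)) i j
        + |ga k| * |E k i j| := by
  simp only [mulVec, dotProduct, Fintype.sum_prod_type, Fintype.sum_sum_type]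
  rw [Finset.sum_eq_single k (fun k' _ hk' => by simp [matAbs, Hmat, hk']) (by simp)]
  simp [matAbs, Hmat, tvec, vecM, Matrix.mul_apply, Matrix.kroneckerMap_apply, Matrix.one_apply,
    abs_mul, apply_ite abs, ite_and, Finset.mul_sum, mul_comm, mul_left_comm, add_assoc]

lemma matAbs_Hmat_mulVec_abs_tvec_snd (k : Fin p) (j : Fin n) (i : Fin m) :
    (matAbs (Hmat X Y al be ga ze ta de) *ᵥ fun y => |tvec A C B D E F y|) (k, 1, j, i) =
      |ze k| * (matAbs (C k) * matAbs (X (k + 1))) i j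
        + |ta k| * (matAbs (Y k) * matAbs (D k)) i j + |de k| * |F k i j| := by
  simp only [mulVec, dotProduct, Fintype.sum_prod_type, Fintype.sum_sum_type]
  rw [Finset.sum_eq_single k (fun k' _ hk' => by simp [matAbs, Hmat, hk']) (by simp)]
  simp [matAbs, Hmat, tvec, vecM, Matrix.mul_apply, Matrix.kroneckerMap_apply, Matrix.one_apply,
    abs_mul, apply_ite abs, ite_and, Finset.mul_sum, mul_comm, mul_left_comm, add_assoc]

lemma linf_matAbs_Hmat_mulVec_abs_tvec_le :
    linf (matAbs (Hmat X Y 1 1 1 1 1 1) *ᵥ fun y => |tvec A C B D E F y|) ≤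
      ⨆ k : Fin p,
        max (maxNorm (matAbs (A k) * matAbs (X k) + matAbs (Y k) * matAbs (B k) + matAbs (E k)))
          (maxNorm (matAbs (C k) * matAbs (X (k + 1)) + matAbs (Y k) * matAbs (D k) +
            matAbs (F k))) := by
  refine Real.iSup_le (fun ⟨k, s, j, i⟩ => ?_)
    (Real.iSup_nonneg fun _ => le_max_of_le_left (maxNorm_nonneg _))
  refine le_ciSup_of_le (Set.finite_range _).bddAbove k ?_
  obtain rfl | rfl : s = 0 ∨ s = 1 := by fin_cases s <;> simp
  · rw [matAbs_Hmat_mulVec_abs_tvec_fst]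
    refine le_max_of_le_left (Eq.trans_le ?_ (abs_le_maxNorm _ i j))
    simp [matAbs, abs_of_nonneg]
  · rw [matAbs_Hmat_mulVec_abs_tvec_snd]
    refine le_max_of_le_right (Eq.trans_le ?_ (abs_le_maxNorm _ i j))
    simp [matAbs, abs_of_nonneg]

end PGCS

theorem componentwise_condition_upper_bound_general (m n p : ℕ) [NeZero p]
    (A C : Fin p → Matrix (Fin m) (Fin m) ℝ) (B D : Fin p → Matrix (Fin n) (Fin n) ℝ)
    (E F X Y : Fin p → Matrix (Fin m) (Fin n) ℝ) :
    let z : BIdx m n p → ℝ := bigVec X Y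
    let v : BIdx m n p → ℝ := (matAbs ((Wmat A C B D)⁻¹ * Hmat X Y 1 1 1 1 1 1)).mulVec
      (fun j => |tvec A C B D E F j|)
    let w : BIdx m n p → ℝ := fun i => if z i = 0 then v i else v i / |z i|
    let Sd : Matrix (BIdx m n p) (BIdx m n p) ℝ :=
      Matrix.diagonal (fun i => if z i = 0 then 1 else (z i)⁻¹)
    linf w ≤
      rowSumNorm (Sd * (Wmat A C B D)⁻¹) *
        ⨆ k : Fin p,
          max (maxNorm (matAbs (A k) * matAbs (X k) + matAbs (Y k) * matAbs (B k) +
                matAbs (E k)))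
            (maxNorm (matAbs (C k) * matAbs (X (k + 1)) + matAbs (Y k) * matAbs (D k) +
              matAbs (F k))) := by
  intro z v w Sd
  have hw : w = matAbs (Sd * (Wmat A C B D)⁻¹ * Hmat X Y 1 1 1 1 1 1) *ᵥ
      fun j => |tvec A C B D E F j| := by
    funext i
    rw [Matrix.mul_assoc, matAbs_diagonal_mul_mulVec]
    by_cases hz : z i = 0
    · simp [w, hz, v]
    · simp [w, hz, v, div_eq_inv_mul]
  rw [hw]
  exact (linf_matAbs_mul_mulVec_le _ _ fun j => abs_nonneg _).trans
    (mul_le_mul_of_nonneg_left (linf_matAbs_Hmat_mulVec_abs_tvec_le A C B D E F X Y)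
      (rowSumNorm_nonneg _))

/-- upper bound for the componentwise condition number numerator. -/
theorem componentwise_condition_upper_bound (m n p : ℕ) [NeZero m] [NeZero n] [NeZero p]
    (A C : Fin p → Matrix (Fin m) (Fin m) ℝ) (B D : Fin p → Matrix (Fin n) (Fin n) ℝ)
    (E F X Y : Fin p → Matrix (Fin m) (Fin n) ℝ)
    (hW : IsUnit (Wmat A C B D))
    (hsol : ∀ k : Fin p, A k * X k - Y k * B k = E k ∧ C k * X (k + 1) - Y k * D k = F k) :
    let z : BIdx m n p → ℝ := bigVec X Y
    let v : BIdx m n p → ℝ := (matAbs ((Wmat A C B D)⁻¹ * Hmat X Y 1 1 1 1 1 1)).mulVec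
      (fun j => |tvec A C B D E F j|)
    let w : BIdx m n p → ℝ := fun i => if z i = 0 then v i else v i / |z i|
    let Sd : Matrix (BIdx m n p) (BIdx m n p) ℝ :=
      Matrix.diagonal (fun i => if z i = 0 then 1 else (z i)⁻¹)
    linf w ≤
      rowSumNorm (Sd * (Wmat A C B D)⁻¹) *
        ⨆ k : Fin p,
          max (maxNorm (matAbs (A k) * matAbs (X k) + matAbs (Y k) * matAbs (B k) +
                matAbs (E k)))
            (maxNorm (matAbs (C k) * matAbs (X (k + 1)) + matAbs (Y k) * matAbs (D k) +
              matAbs (F k))) :=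
  componentwise_condition_upper_bound_general m n p A C B D E F X Y
end
end
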